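/- arXiv:1509.05707 — 2 statements merged into one kernel-verified Lean document; each statement's English description precedes it below -/
import Mathlib

section
/- Let F be a field of characteristic p (where p is a prime or p = 0) and let m = (m_1,…,m_d) ∈ ℕ^d be a nonzero multiexponent. Then the maximal length of a regular chain for m over F equals Σ_{j=1}^d ω_p(m_j). Moreover, in any regular chain for m of this maximal length, consecutive multiexponents differ in exactly one coordinate. -/
open Finset

/-- The `p`-weight of a natural number: the sum of its base-`p` digits (and `t` itself
when `p = 0`). -/
def pWeight (p t : ℕ) : ℕ := if p = 0 then t else (Nat.digits p t).sum

/-- For multiexponents `a, b ∈ ℕ^d`, `binom(a, b) = ∏_j C(a_j, b_j)`. -/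
def multiBinom {d : ℕ} (a b : Fin d →₀ ℕ) : ℕ := ∏ j, (a j).choose (b j)

lemma pWeight_zero (p : ℕ) : pWeight p 0 = 0 := by
  unfold pWeight; split <;> simp

lemma one_le_sum_digits {p : ℕ} (hp : 1 < p) : ∀ t : ℕ, t ≠ 0 → 1 ≤ (Nat.digits p t).sum := by
  intro t
  induction t using Nat.strong_induction_on with
  | _ t ih =>
    intro ht
    rw [Nat.digits_def' hp (Nat.pos_of_ne_zero ht)]
    simp only [List.sum_cons]
    rcases Nat.eq_zero_or_pos (t % p) with h | h
    · have h2 : t / p ≠ 0 := by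
        intro h3
        have h4 : t < p := (Nat.div_eq_zero_iff.mp h3).resolve_left (by omega)
        rw [Nat.mod_eq_of_lt h4] at h
        exact ht h
      have := ih (t / p) (Nat.div_lt_self (Nat.pos_of_ne_zero ht) hp) h2
      omega
    · omega

lemma pWeight_pos {p t : ℕ} (hp : p.Prime ∨ p = 0) (ht : t ≠ 0) : 1 ≤ pWeight p t := by
  unfold pWeight
  rcases hp with hp | rfl
  · rw [if_neg hp.ne_zero]
    exact one_le_sum_digits hp.one_lt t ht
  · simp; omega

lemma sum_digits_pow_mul {p : ℕ} (hp : 1 < p) (v x : ℕ) :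
    (Nat.digits p (p ^ v * x)).sum = (Nat.digits p x).sum := by
  rcases Nat.eq_zero_or_pos x with rfl | hx
  · simp
  · rw [Nat.digits_base_pow_mul hp hx]
    simp

lemma sum_digits_pred {p u : ℕ} (hp : 1 < p) (hu : ¬ p ∣ u) :
    (Nat.digits p (u - 1)).sum + 1 = (Nat.digits p u).sum := by
  have hu0 : u ≠ 0 := by rintro rfl; exact hu (dvd_zero p)
  have hr : u % p ≠ 0 := by
    intro h; exact hu (Nat.dvd_of_mod_eq_zero h)
  have hdm := Nat.div_add_mod u p
  have hrp : u % p < p := Nat.mod_lt _ (by omega)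
  rcases eq_or_ne u 1 with rfl | h1
  · have : Nat.digits p 1 = [1] := by
      rw [Nat.digits_def' hp one_pos, Nat.mod_eq_of_lt hp, Nat.div_eq_of_lt hp]
      simp
    simp [this]
  · have hu1 : 1 < u := by omega
    have key : u - 1 = p * (u / p) + (u % p - 1) := by omega
    have hmod : (u - 1) % p = u % p - 1 := by
      have e1 : (u - 1) % p = (u % p - 1) % p := by
        conv_lhs => rw [key]
        rw [Nat.mul_add_mod]
      rw [e1, Nat.mod_eq_of_lt (show u % p - 1 < p by omega)]
    have hdiv : (u - 1) / p = u / p := by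
      have e0 : (u % p - 1) / p = 0 := Nat.div_eq_of_lt (by omega)
      have e1 : (u - 1) / p = u / p + (u % p - 1) / p := by
        conv_lhs => rw [key]
        rw [Nat.mul_add_div (show 0 < p by omega)]
      rw [e1, e0]
      omega
    rw [Nat.digits_def' hp (by omega : 0 < u - 1), Nat.digits_def' hp (by omega : 0 < u),
      hmod, hdiv]
    simp only [List.sum_cons]
    omega

/-- Per-coordinate step for the construction of a maximal chain. -/
lemma pWeight_step {F : Type*} [Field F] {p : ℕ} [CharP F p] (hp : p.Prime ∨ p = 0)
    {t : ℕ} (ht : t ≠ 0) :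
    ∃ t', t' < t ∧ pWeight p t' + 1 = pWeight p t ∧ ((t.choose t' : ℕ) : F) ≠ 0 := by
  rcases hp with hp | rfl
  · haveI : Fact p.Prime := ⟨hp⟩
    have hp1 : 1 < p := hp.one_lt
    set v := t.factorization p with hv
    set u := ordCompl[p] t with hu
    have hund : ¬ p ∣ u := Nat.not_dvd_ordCompl hp ht
    have htu : p ^ v * u = t := Nat.ordProj_mul_ordCompl_eq_self t p
    have hu0 : u ≠ 0 := by rintro h; rw [h, mul_zero] at htu; exact ht htu.symm
    have hpv_le : p ^ v ≤ t := by
      calc p ^ v = p ^ v * 1 := (mul_one _).symm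
      _ ≤ p ^ v * u := Nat.mul_le_mul_left _ (Nat.one_le_iff_ne_zero.mpr hu0)
      _ = t := htu
    have hpv_pos : 0 < p ^ v := Nat.pow_pos (by omega)
    refine ⟨t - p ^ v, by omega, ?_, ?_⟩
    · have hsub : t - p ^ v = p ^ v * (u - 1) := by
        rcases u with _ | u'
        · omega
        · simp only [Nat.add_sub_cancel]
          rw [← htu, Nat.mul_succ]
          omega
      unfold pWeight
      rw [if_neg hp.ne_zero, if_neg hp.ne_zero, hsub, sum_digits_pow_mul hp1, ← htu,
        sum_digits_pow_mul hp1]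
      exact sum_digits_pred hp1 hund
    · rw [Ne, CharP.cast_eq_zero_iff F p]
      intro hdvd
      have hne : t.choose (t - p ^ v) ≠ 0 :=
        (Nat.choose_pos (by omega)).ne'
      have hval : padicValNat p (t.choose (t - p ^ v)) ≠ 0 := by
        intro h0
        rw [padicValNat.eq_zero_iff] at h0
        rcases h0 with h | h | h
        · omega
        · exact hne h
        · exact h hdvd
      have hk := sub_one_mul_padicValNat_choose_eq_sub_sum_digits
        (p := p) (show t - p ^ v ≤ t by omega)
      have hcanc : t - (t - p ^ v) = p ^ v := by omega
      rw [hcanc] at hk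
      have hSpow : (Nat.digits p (p ^ v)).sum = 1 := by
        have := sum_digits_pow_mul hp1 v 1
        rw [mul_one] at this
        rw [this]
        rw [Nat.digits_def' hp1 one_pos, Nat.mod_eq_of_lt hp1, Nat.div_eq_of_lt hp1]
        simp
      have hsub : t - p ^ v = p ^ v * (u - 1) := by
        rcases u with _ | u'
        · omega
        · simp only [Nat.add_sub_cancel]
          rw [← htu, Nat.mul_succ]
          omega
      have hS1 : (Nat.digits p (t - p ^ v)).sum + 1 = (Nat.digits p t).sum := by
        rw [hsub, sum_digits_pow_mul hp1, ← htu, sum_digits_pow_mul hp1]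
        exact sum_digits_pred hp1 hund
      rw [hSpow] at hk
      have h0 : (p - 1) * padicValNat p (t.choose (t - p ^ v)) = 0 := by omega
      rcases Nat.mul_eq_zero.mp h0 with h | h
      · omega
      · exact hval h
  · haveI : CharZero F := CharP.charP_to_charZero F
    refine ⟨t - 1, by omega, ?_, ?_⟩
    · unfold pWeight; simp; omega
    · have : t.choose (t - 1) = t := by
        rw [Nat.choose_symm_of_eq_add (show t = (t - 1) + 1 by omega), Nat.choose_one_right]
      rw [this]
      exact Nat.cast_ne_zero.mpr ht

/-- Per-coordinate upper bound: if the binomial coefficient does not vanish in `F`,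
then the `p`-weights add up subadditively in the right way. -/
lemma pWeight_le {F : Type*} [Field F] {p : ℕ} [CharP F p] (hp : p.Prime ∨ p = 0)
    {a b : ℕ} (hba : b ≤ a) (hC : ((a.choose b : ℕ) : F) ≠ 0) :
    pWeight p b + pWeight p (a - b) ≤ pWeight p a := by
  rcases hp with hp | rfl
  · haveI : Fact p.Prime := ⟨hp⟩
    have hdvd : ¬ p ∣ a.choose b := by
      rwa [Ne, CharP.cast_eq_zero_iff F p] at hC
    have hval : padicValNat p (a.choose b) = 0 := padicValNat.eq_zero_of_not_dvd hdvd
    have hk := sub_one_mul_padicValNat_choose_eq_sub_sum_digits (p := p) hba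
    rw [hval, mul_zero] at hk
    unfold pWeight
    rw [if_neg hp.ne_zero, if_neg hp.ne_zero, if_neg hp.ne_zero]
    omega
  · unfold pWeight; simp; omega

/-- The multi-weight of `n`. -/
lemma multi_step {F : Type*} [Field F] {p : ℕ} [CharP F p] (hp : p.Prime ∨ p = 0)
    {d : ℕ} {a b : Fin d →₀ ℕ} (hba : b ≤ a)
    (hC : ((multiBinom a b : ℕ) : F) ≠ 0) :
    (∑ j, pWeight p (b j)) + (univ.filter fun j => a j ≠ b j).card ≤ ∑ j, pWeight p (a j) := by
  have hCj : ∀ j, (((a j).choose (b j) : ℕ) : F) ≠ 0 := by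
    intro j h0
    apply hC
    rw [multiBinom, Nat.cast_prod]
    exact Finset.prod_eq_zero (mem_univ j) h0
  rw [Finset.card_filter, ← Finset.sum_add_distrib]
  apply Finset.sum_le_sum
  intro j _
  have hj : b j ≤ a j := Finsupp.le_def.mp hba j
  have h1 := pWeight_le hp hj (hCj j)
  by_cases hne : a j ≠ b j
  · rw [if_pos hne]
    have : 1 ≤ pWeight p (a j - b j) := pWeight_pos hp (by omega)
    omega
  · rw [if_neg hne]
    omega

/-- Existence of a chain of maximal length. -/
lemma chain_exists {F : Type*} [Field F] {p : ℕ} [CharP F p] (hp : p.Prime ∨ p = 0)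
    {d : ℕ} : ∀ (k : ℕ) (n : Fin d →₀ ℕ), (∑ j, pWeight p (n j)) = k →
    ∃ c : Fin (k + 1) → (Fin d →₀ ℕ), c 0 = n ∧ c (Fin.last k) = 0 ∧
      (∀ i : Fin k, c i.succ < c i.castSucc) ∧
      (∀ i : Fin k, ((multiBinom (c i.castSucc) (c i.succ) : ℕ) : F) ≠ 0) := by
  intro k
  induction k with
  | zero =>
    intro n hn
    have hn0 : n = 0 := by
      ext j
      by_contra hj
      have h1 : 1 ≤ pWeight p (n j) := pWeight_pos hp hj
      have h2 : pWeight p (n j) ≤ ∑ j', pWeight p (n j') :=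
        Finset.single_le_sum (f := fun j' => pWeight p (n j')) (fun _ _ => Nat.zero_le _)
          (mem_univ j)
      omega
    subst hn0
    exact ⟨fun _ => 0, rfl, rfl, fun i => i.elim0, fun i => i.elim0⟩
  | succ k ih =>
    intro n hn
    have hex : ∃ j0, n j0 ≠ 0 := by
      by_contra hall
      push_neg at hall
      have : (∑ j, pWeight p (n j)) = 0 := by
        apply Finset.sum_eq_zero
        intro j _
        rw [hall j, pWeight_zero]
      omega
    obtain ⟨j0, hj0⟩ := hex
    obtain ⟨t', ht'lt, ht'w, ht'C⟩ := pWeight_step (F := F) hp hj0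
    set n' : Fin d →₀ ℕ := n.update j0 t' with hn'
    have hn'app : ∀ j, n' j = if j = j0 then t' else n j := by
      intro j
      rw [hn', Finsupp.coe_update]
      by_cases h : j = j0
      · subst h; simp
      · simp [h]
    have hn'j0 : n' j0 = t' := by rw [hn'app]; simp
    have hsum' : (∑ j, pWeight p (n' j)) = k := by
      have e1 : ∑ j, pWeight p (n' j)
          = ∑ j ∈ univ \ {j0}, pWeight p (n' j) + pWeight p (n' j0) :=
        Finset.sum_eq_sum_sdiff_singleton_add (mem_univ j0) _
      have e2 : ∑ j, pWeight p (n j)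
          = ∑ j ∈ univ \ {j0}, pWeight p (n j) + pWeight p (n j0) :=
        Finset.sum_eq_sum_sdiff_singleton_add (mem_univ j0) _
      have e3 : ∑ j ∈ univ \ {j0}, pWeight p (n' j) = ∑ j ∈ univ \ {j0}, pWeight p (n j) := by
        apply Finset.sum_congr rfl
        intro j hj
        rw [Finset.mem_sdiff, Finset.mem_singleton] at hj
        rw [hn'app, if_neg hj.2]
      rw [e2] at hn
      rw [e1, e3, hn'j0]
      omega
    obtain ⟨c', hc'0, hc'last, hc'lt, hc'C⟩ := ih n' hsum'
    refine ⟨Fin.cases n c', ?_, ?_, ?_, ?_⟩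
    · simp
    · rw [← Fin.succ_last]
      simp only [Fin.cases_succ]
      exact hc'last
    · intro i
      refine Fin.cases ?_ ?_ i
      · simp only [Fin.castSucc_zero, Fin.cases_succ, Fin.cases_zero, hc'0]
        constructor
        · intro j
          rw [hn'app]
          by_cases h : j = j0
          · subst h; simp; omega
          · simp [if_neg h, le_refl]
        · intro hle
          have := Finsupp.le_def.mp hle j0
          rw [hn'j0] at this
          omega
      · intro i'
        simp only [← Fin.succ_castSucc, Fin.cases_succ]
        exact hc'lt i'
    · intro i
      refine Fin.cases ?_ ?_ i
      · simp only [Fin.castSucc_zero, Fin.cases_succ, Fin.cases_zero, hc'0]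
        have hprod : multiBinom n n' = (n j0).choose t' := by
          rw [multiBinom]
          rw [Finset.prod_eq_single j0]
          · rw [hn'j0]
          · intro j _ hj
            rw [hn'app, if_neg hj, Nat.choose_self]
          · intro h; exact absurd (mem_univ j0) h
        rw [hprod]
        exact ht'C
      · intro i'
        simp only [← Fin.succ_castSucc, Fin.cases_succ]
        exact hc'C i'

/-- over a field of characteristic `p` (prime or zero), the maximal length
of a regular chain `m = m_1 > m_2 > ⋯ > m_s > 0` for a nonzero multiexponent `m`
(regular meaning `binom(m_i, m_{i+1}) ≠ 0` in `F`) equals `Σ_j ω_p(m_j)`; moreover, in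
any regular chain of this maximal length, consecutive multiexponents differ in exactly
one coordinate. Chains are encoded as functions `c : Fin (s+1) → ℕ^d` with `c 0 = m` and
`c s = 0` (the extra factor `binom(m_s, 0) = 1 ≠ 0` is harmless). -/
theorem max_regular_chain_length_and_one_coordinate_steps
    {F : Type*} [Field F] {p : ℕ} [CharP F p] (hp : p.Prime ∨ p = 0)
    {d : ℕ} (m : Fin d →₀ ℕ) (hm : m ≠ 0) :
    IsGreatest
      {s : ℕ | ∃ c : Fin (s + 1) → (Fin d →₀ ℕ), c 0 = m ∧ c (Fin.last s) = 0 ∧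
        (∀ i : Fin s, c i.succ < c i.castSucc) ∧
        (∀ i : Fin s, ((multiBinom (c i.castSucc) (c i.succ) : ℕ) : F) ≠ 0)}
      (∑ j, pWeight p (m j)) ∧
    (∀ (s : ℕ) (c : Fin (s + 1) → (Fin d →₀ ℕ)),
      s = (∑ j, pWeight p (m j)) →
      c 0 = m → c (Fin.last s) = 0 →
      (∀ i : Fin s, c i.succ < c i.castSucc) →
      (∀ i : Fin s, ((multiBinom (c i.castSucc) (c i.succ) : ℕ) : F) ≠ 0) →
      ∀ i : Fin s, (i : ℕ) + 1 < s →
        ∃! j : Fin d, c i.castSucc j ≠ c i.succ j) := by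
  classical
  set W : (Fin d →₀ ℕ) → ℕ := fun n => ∑ j, pWeight p (n j) with hW
  -- General analysis of an arbitrary chain.
  have main : ∀ (s : ℕ) (c : Fin (s + 1) → (Fin d →₀ ℕ)),
      c 0 = m → c (Fin.last s) = 0 →
      (∀ i : Fin s, c i.succ < c i.castSucc) →
      (∀ i : Fin s, ((multiBinom (c i.castSucc) (c i.succ) : ℕ) : F) ≠ 0) →
      s ≤ W m ∧ (s = W m → ∀ i : Fin s,
        (univ.filter fun j => c i.castSucc j ≠ c i.succ j).card = 1) := by
    intro s c hc0 hclast hclt hcC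
    set C : ℕ → (Fin d →₀ ℕ) := fun k => c ⟨min k s, by omega⟩ with hC
    have hCfin : ∀ i : Fin s, C (i : ℕ) = c i.castSucc ∧ C ((i : ℕ) + 1) = c i.succ := by
      intro i
      constructor
      · show c _ = _
        congr 1
        exact Fin.ext (by simp [Nat.min_eq_left (le_of_lt i.isLt)])
      · show c _ = _
        congr 1
        exact Fin.ext (by simp [Nat.min_eq_left i.isLt])
    set h : ℕ → ℕ := fun i => (univ.filter fun j => C i j ≠ C (i + 1) j).card with hh
    have hstep : ∀ i : Fin s, W (C ((i : ℕ) + 1)) + h (i : ℕ) ≤ W (C (i : ℕ)) := by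
      intro i
      obtain ⟨e1, e2⟩ := hCfin i
      rw [hh]
      simp only [e1, e2]
      exact multi_step hp (le_of_lt (hclt i)) (hcC i)
    have hpos : ∀ i : Fin s, 1 ≤ h (i : ℕ) := by
      intro i
      obtain ⟨e1, e2⟩ := hCfin i
      rw [hh]
      simp only [e1, e2]
      rw [Nat.one_le_iff_ne_zero, Ne, Finset.card_eq_zero, Finset.filter_eq_empty_iff]
      intro hall
      apply (hclt i).ne
      ext j
      exact (of_not_not (hall (mem_univ j))).symm
    have key : ∀ k, k ≤ s → (∑ i ∈ Finset.range k, h i) + W (C k) ≤ W (C 0) := by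
      intro k
      induction k with
      | zero => simp
      | succ k ihk =>
        intro hk
        have h1 := ihk (by omega)
        have h2 := hstep ⟨k, by omega⟩
        rw [Finset.sum_range_succ]
        simp only at h2
        omega
    have hC0 : C 0 = m := by
      rw [hC]
      simp only [Nat.min_eq_left (Nat.zero_le s)]
      rw [show (⟨0, by omega⟩ : Fin (s + 1)) = 0 from rfl, hc0]
    have hCs : C s = 0 := by
      rw [hC]
      simp only [min_self]
      rw [show (⟨s, by omega⟩ : Fin (s + 1)) = Fin.last s from rfl, hclast]
    have hWCs : W (C s) = 0 := by
      rw [hCs, hW]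
      apply Finset.sum_eq_zero
      intro j _
      simp [pWeight_zero]
    have hsum_le : (∑ i ∈ Finset.range s, h i) ≤ W m := by
      have := key s le_rfl
      rw [hWCs, hC0] at this
      omega
    have hs_le_sum : s ≤ ∑ i ∈ Finset.range s, h i := by
      calc s = ∑ _i ∈ Finset.range s, 1 := by simp
      _ ≤ ∑ i ∈ Finset.range s, h i := by
        apply Finset.sum_le_sum
        intro i hi
        rw [Finset.mem_range] at hi
        exact hpos ⟨i, hi⟩
    constructor
    · omega
    · intro hseq i
      have hall : ∀ i' ∈ Finset.range s, 1 = h i' := by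
        apply (Finset.sum_eq_sum_iff_of_le ?_).mp
        · simp; omega
        · intro i' hi'
          rw [Finset.mem_range] at hi'
          exact hpos ⟨i', hi'⟩
      have h1 : h (i : ℕ) = 1 := (hall (i : ℕ) (Finset.mem_range.mpr i.isLt)).symm
      obtain ⟨e1, e2⟩ := hCfin i
      rw [hh] at h1
      simp only [e1, e2] at h1
      exact h1
  constructor
  · constructor
    · exact chain_exists hp (∑ j, pWeight p (m j)) m rfl
    · rintro s ⟨c, hc0, hclast, hclt, hcC⟩
      exact (main s c hc0 hclast hclt hcC).1
  · intro s c hs hc0 hclast hclt hcC i _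
    have hcard := (main s c hc0 hclast hclt hcC).2 hs i
    obtain ⟨j0, hj0⟩ := Finset.card_eq_one.mp hcard
    refine ⟨j0, ?_, ?_⟩
    · have : j0 ∈ univ.filter fun j => c i.castSucc j ≠ c i.succ j := by
        rw [hj0]; exact Finset.mem_singleton_self j0
      exact (Finset.mem_filter.mp this).2
    · intro j hj
      have : j ∈ univ.filter fun j => c i.castSucc j ≠ c i.succ j :=
        Finset.mem_filter.mpr ⟨mem_univ j, hj⟩
      rw [hj0, Finset.mem_singleton] at this
      exact this
end

section
/- Let F be a field of characteristic p (where p is a prime or p = 0) and let f ∈ F[x_1,…,x_d] be a nonzero monomial f = c·x_1^{m_1}⋯x_d^{m_d} with (m_1,…,m_d) ≠ 0. Then the formal combinatorial degree of f is at most the total degree m_1 + ⋯ + m_d of f, with equality if and only if f is totally reduced (i.e., m_j < p for all j; in characteristic 0 every monomial is totally reduced and equality always holds). -/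
open MvPolynomial Finset

/-- The formal `n`-th defect (derived form) of a polynomial `f ∈ F[x_1,…,x_d]`:
`Δ^n f = Σ_{∅ ≠ S ⊆ {1,…,n}} (−1)^{n−|S|} f(Σ_{i∈S} x_{i,1}, …, Σ_{i∈S} x_{i,d})`,
a polynomial in the `n*d` variables `x_{i,j}`. -/
noncomputable def polDefect {F : Type*} [Field F] {d : ℕ} (n : ℕ)
    (f : MvPolynomial (Fin d) F) : MvPolynomial (Fin n × Fin d) F :=
  ∑ S ∈ Finset.univ.powerset.filter (fun S : Finset (Fin n) => S.Nonempty),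
    (-1 : F) ^ (n - S.card) •
      MvPolynomial.aeval (fun j : Fin d => ∑ i ∈ S, MvPolynomial.X (i, j)) f

section Aux

lemma neg_one_pow_sub_eq {F : Type*} [Field F] {u w : ℕ} (h : u ≤ w) :
    (-1:F)^(w-u) = (-1)^w * (-1)^u := by
  have h2 : ((-1:F)^u) * ((-1:F)^u) = 1 := by
    rw [← pow_add, ← two_mul, pow_mul]; norm_num
  have h3 : (-1:F)^(w-u) * ((-1:F)^u * (-1:F)^u) = (-1)^w * (-1)^u := by
    rw [← mul_assoc, ← pow_add, Nat.sub_add_cancel h]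
  rw [h2, mul_one] at h3; exact h3

lemma signsum {F : Type*} [Field F] {n : ℕ} {T : Finset (Fin n)} (hT : T ≠ univ) :
    ∑ S ∈ univ.powerset.filter (fun S => T ⊆ S), (-1:F)^(n - S.card) = 0 := by
  have hbij : ∑ S ∈ univ.powerset.filter (fun S => T ⊆ S), (-1:F)^(n - S.card)
      = ∑ U ∈ Tᶜ.powerset, (-1:F)^(n - (T ∪ U).card) := by
    refine Finset.sum_nbij' (fun S => S \ T) (fun U => T ∪ U) ?_ ?_ ?_ ?_ ?_
    · intro S hS
      simp only [mem_filter, mem_powerset] at hS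
      simp only [mem_powerset]
      intro x hx
      simp only [mem_sdiff] at hx
      simp [Finset.mem_compl, hx.2]
    · intro U hU
      simp only [mem_powerset] at hU
      simp only [mem_filter, mem_powerset]
      exact ⟨subset_univ _, subset_union_left⟩
    · intro S hS
      simp only [mem_filter, mem_powerset] at hS
      exact Finset.union_sdiff_of_subset hS.2
    · intro U hU
      simp only [mem_powerset] at hU
      apply Finset.union_sdiff_cancel_left
      rw [Finset.disjoint_left]
      intro a haT haU
      exact (Finset.mem_compl.mp (hU haU)) haT
    · intro S hS
      simp only [mem_filter, mem_powerset] at hS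
      rw [Finset.union_sdiff_of_subset hS.2]
  rw [hbij]
  have key : ∀ U ∈ Tᶜ.powerset, (-1:F)^(n - (T ∪ U).card) = (-1)^(Tᶜ.card) * (-1)^U.card := by
    intro U hU
    simp only [mem_powerset] at hU
    have hdisj : Disjoint T U := by
      rw [Finset.disjoint_left]; intro a haT haU; exact (Finset.mem_compl.mp (hU haU)) haT
    rw [Finset.card_union_of_disjoint hdisj]
    have hc : Tᶜ.card = n - T.card := by rw [Finset.card_compl]; simp
    have hUle : U.card ≤ Tᶜ.card := Finset.card_le_card hU
    have hTn : T.card ≤ n := by simpa using Finset.card_le_univ T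
    have h1 : n - (T.card + U.card) = Tᶜ.card - U.card := by omega
    rw [h1, neg_one_pow_sub_eq (by omega)]
  rw [Finset.sum_congr rfl key, ← Finset.mul_sum]
  have hne : Tᶜ.Nonempty := by
    rw [Finset.nonempty_iff_ne_empty]
    intro h
    exact hT (by simpa using congrArg compl h)
  have hz : ∑ U ∈ Tᶜ.powerset, (-1:F)^U.card = 0 := by
    have hint := Finset.sum_powerset_neg_one_pow_card_of_nonempty hne
    calc ∑ U ∈ Tᶜ.powerset, (-1:F)^U.card
        = ((∑ U ∈ Tᶜ.powerset, (-1:ℤ)^U.card : ℤ) : F) := by push_cast; rfl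
      _ = 0 := by rw [hint]; simp
  rw [hz, mul_zero]

variable {F : Type*} [Field F] {d n : ℕ}

/-- restriction: kill variables whose block index is outside `S`. -/
noncomputable def resHom (S : Finset (Fin n)) :
    MvPolynomial (Fin n × Fin d) F →ₐ[F] MvPolynomial (Fin n × Fin d) F :=
  aeval (fun v => if v.1 ∈ S then X v else 0)

lemma resHom_monomial (S : Finset (Fin n)) (β : (Fin n × Fin d) →₀ ℕ) (b : F) :
    resHom S (monomial β b) =
      if ∀ v ∈ β.support, v.1 ∈ S then monomial β b else 0 := by
  rw [resHom, aeval_monomial]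
  by_cases h : ∀ v ∈ β.support, v.1 ∈ S
  · rw [if_pos h]
    have : (β.prod fun v k => (if v.1 ∈ S then (X v : MvPolynomial (Fin n × Fin d) F) else 0) ^ k)
        = β.prod fun v k => (X v) ^ k := by
      apply Finsupp.prod_congr
      intro v hv
      rw [if_pos (h v hv)]
    rw [this, Finsupp.prod, prod_X_pow_eq_monomial, algebraMap_eq, C_mul_monomial, mul_one]
  · rw [if_neg h]
    push_neg at h
    obtain ⟨v, hv, hvS⟩ := h
    have : (β.prod fun v k =>
        (if v.1 ∈ S then (X v : MvPolynomial (Fin n × Fin d) F) else 0) ^ k) = 0 := by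
      rw [Finsupp.prod]
      apply Finset.prod_eq_zero hv
      rw [if_neg hvS]
      exact zero_pow (Finsupp.mem_support_iff.mp hv)
    rw [this, mul_zero]

lemma coeff_resHom (S : Finset (Fin n)) (g : MvPolynomial (Fin n × Fin d) F)
    (α : (Fin n × Fin d) →₀ ℕ) :
    coeff α (resHom S g) = if α.support.image Prod.fst ⊆ S then coeff α g else 0 := by
  conv_lhs => rw [g.as_sum]
  rw [map_sum, coeff_sum]
  have hcond : ∀ β : (Fin n × Fin d) →₀ ℕ,
      (∀ v ∈ β.support, v.1 ∈ S) ↔ β.support.image Prod.fst ⊆ S := by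
    intro β
    rw [Finset.image_subset_iff]
  by_cases hαs : α ∈ g.support
  · rw [Finset.sum_eq_single α]
    · rw [resHom_monomial]
      by_cases h : α.support.image Prod.fst ⊆ S
      · rw [if_pos ((hcond α).mpr h), if_pos h, coeff_monomial, if_pos rfl]
      · rw [if_neg (fun hh => h ((hcond α).mp hh)), if_neg h, coeff_zero]
    · intro β hβ hβα
      rw [resHom_monomial]
      split
      · rw [coeff_monomial, if_neg hβα]
      · exact coeff_zero _
    · intro h; exact absurd hαs h
  · have hz : coeff α g = 0 := Finsupp.notMem_support_iff.mp hαs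
    rw [hz, ite_self]
    apply Finset.sum_eq_zero
    intro β hβ
    rw [resHom_monomial]
    split
    · rw [coeff_monomial, if_neg (fun (h : β = α) => hαs (h ▸ hβ))]
    · exact coeff_zero _

lemma polDefect_eq (f : MvPolynomial (Fin d) F) :
    polDefect n f = ∑ S ∈ Finset.univ.powerset.filter (fun S : Finset (Fin n) => S.Nonempty),
      (-1 : F) ^ (n - S.card) •
        resHom S (aeval (fun j : Fin d => ∑ i : Fin n, X (i, j)) f) := by
  unfold polDefect
  refine Finset.sum_congr rfl fun S hS => ?_
  congr 1
  rw [resHom, comp_aeval_apply]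
  have hfun : ∀ j : Fin d,
      (aeval (R := F) fun v : Fin n × Fin d => if v.1 ∈ S then X v else 0)
        (∑ i : Fin n, X (i, j)) = ∑ i ∈ S, (X (i, j) : MvPolynomial (Fin n × Fin d) F) := by
    intro j
    rw [map_sum]
    simp only [aeval_X]
    rw [Finset.sum_ite_mem, Finset.univ_inter]
  exact (congrArg (fun u : Fin d → MvPolynomial (Fin n × Fin d) F => (aeval u) f)
    (funext hfun)).symm

lemma coeff_defect_sum (g : MvPolynomial (Fin n × Fin d) F) (hg0 : coeff 0 g = 0)
    (α : (Fin n × Fin d) →₀ ℕ) :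
    coeff α (∑ S ∈ Finset.univ.powerset.filter (fun S : Finset (Fin n) => S.Nonempty),
        (-1 : F) ^ (n - S.card) • resHom S g) =
      if α.support.image Prod.fst = univ then coeff α g else 0 := by
  classical
  rw [coeff_sum]
  simp only [coeff_smul, coeff_resHom, smul_eq_mul, mul_ite, mul_zero]
  by_cases hα : α = 0
  · subst hα
    simp only [Finsupp.support_zero, Finset.image_empty, Finset.empty_subset, if_true, hg0,
      mul_zero, Finset.sum_const_zero]
    rw [ite_self]
  · have hTne : (α.support.image Prod.fst).Nonempty :=
      Finset.Nonempty.image (Finsupp.support_nonempty_iff.mpr hα) _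
    set T := α.support.image Prod.fst with hT
    rw [← Finset.sum_filter]
    have hfil : ((univ.powerset.filter (fun S : Finset (Fin n) => S.Nonempty)).filter
        (fun S => T ⊆ S)) = univ.powerset.filter (fun S => T ⊆ S) := by
      ext S
      simp only [Finset.mem_filter, Finset.mem_powerset]
      constructor
      · rintro ⟨⟨h1, _⟩, h2⟩; exact ⟨h1, h2⟩
      · rintro ⟨h1, h2⟩; exact ⟨⟨h1, hTne.mono h2⟩, h2⟩
    rw [hfil, ← Finset.sum_mul]
    by_cases hTu : T = univ
    · rw [if_pos hTu, hTu]
      have : (univ.powerset.filter fun S : Finset (Fin n) => univ ⊆ S) = {univ} := by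
        ext S
        simp only [Finset.mem_filter, Finset.mem_powerset, Finset.mem_singleton]
        constructor
        · rintro ⟨h1, h2⟩; exact Finset.Subset.antisymm h1 h2
        · rintro rfl; exact ⟨Finset.Subset.refl _, Finset.Subset.refl _⟩
      rw [this, Finset.sum_singleton, Finset.card_univ, Fintype.card_fin, Nat.sub_self,
        pow_zero, one_mul]
    · rw [if_neg hTu, signsum hTu, zero_mul]

lemma coeff_polDefect (f : MvPolynomial (Fin d) F)
    (hf : coeff 0 (aeval
      (fun j : Fin d => ∑ i : Fin n, (X (i, j) : MvPolynomial (Fin n × Fin d) F)) f) = 0)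
    (α : (Fin n × Fin d) →₀ ℕ) :
    coeff α (polDefect n f) =
      if α.support.image Prod.fst = univ
      then coeff α (aeval
        (fun j : Fin d => ∑ i : Fin n, (X (i, j) : MvPolynomial (Fin n × Fin d) F)) f) else 0 := by
  rw [polDefect_eq]
  exact coeff_defect_sum _ hf α

lemma prod_X_pow_univ {σ : Type*} [Fintype σ] [DecidableEq σ] (f : σ →₀ ℕ) :
    ∏ v : σ, (X v : MvPolynomial σ F) ^ f v = monomial f 1 := by
  rw [← prod_X_pow_eq_monomial]
  exact (Finset.prod_subset (subset_univ _) (fun v _ hv => by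
    rw [Finsupp.notMem_support_iff.mp hv, pow_zero])).symm

lemma fullSub_monomial (m : Fin d →₀ ℕ) (c : F) :
    aeval (fun j : Fin d => ∑ i : Fin n, (X (i, j) : MvPolynomial (Fin n × Fin d) F))
        (monomial m c)
      = C c * ∏ j : Fin d, (∑ i : Fin n, (X (i, j) : MvPolynomial (Fin n × Fin d) F)) ^ m j := by
  rw [aeval_monomial, algebraMap_eq]
  congr 1
  rw [Finsupp.prod_fintype]
  intro j
  exact pow_zero _

lemma coeff_fullSub (m : Fin d →₀ ℕ) (c : F) (α : (Fin n × Fin d) →₀ ℕ) :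
    coeff α (aeval (fun j : Fin d => ∑ i : Fin n, (X (i, j) : MvPolynomial (Fin n × Fin d) F))
        (monomial m c)) =
      if ∀ j, ∑ i : Fin n, α (i, j) = m j
      then c * ∏ j : Fin d, ((Nat.multinomial univ fun i => α (i, j) : ℕ) : F)
      else 0 := by
  classical
  rw [fullSub_monomial, coeff_C_mul]
  have expand : ∏ j : Fin d, (∑ i : Fin n, (X (i, j) : MvPolynomial (Fin n × Fin d) F)) ^ m j
      = ∑ κ ∈ Fintype.piFinset (fun j : Fin d => piAntidiag (univ : Finset (Fin n)) (m j)),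
          monomial (Finsupp.equivFunOnFinite.symm fun v : Fin n × Fin d => κ v.2 v.1)
            ((∏ j : Fin d, Nat.multinomial univ (κ j) : ℕ) : F) := by
    calc ∏ j : Fin d, (∑ i : Fin n, (X (i, j) : MvPolynomial (Fin n × Fin d) F)) ^ m j
        = ∏ j : Fin d, ∑ k ∈ piAntidiag (univ : Finset (Fin n)) (m j),
            (Nat.multinomial univ k : MvPolynomial (Fin n × Fin d) F) *
              ∏ i : Fin n, X (i, j) ^ k i := by
          exact Finset.prod_congr rfl fun j _ => Finset.sum_pow_eq_sum_piAntidiag univ _ (m j)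
      _ = ∑ κ ∈ Fintype.piFinset (fun j : Fin d => piAntidiag (univ : Finset (Fin n)) (m j)),
            ∏ j : Fin d, ((Nat.multinomial univ (κ j) : MvPolynomial (Fin n × Fin d) F) *
              ∏ i : Fin n, X (i, j) ^ κ j i) := by
          rw [Finset.prod_univ_sum]
      _ = _ := by
          refine Finset.sum_congr rfl fun κ hκ => ?_
          rw [Finset.prod_mul_distrib]
          have h1 : ∏ j : Fin d, ∏ i : Fin n, (X (i, j) : MvPolynomial (Fin n × Fin d) F) ^ κ j i
              = monomial (Finsupp.equivFunOnFinite.symm fun v : Fin n × Fin d => κ v.2 v.1) 1 := by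
            rw [← prod_X_pow_univ (F := F)
              (Finsupp.equivFunOnFinite.symm fun v : Fin n × Fin d => κ v.2 v.1)]
            rw [Fintype.prod_prod_type]
            rw [Finset.prod_comm]
            rfl
          rw [h1]
          have h2 : ∏ j : Fin d, (Nat.multinomial univ (κ j) : MvPolynomial (Fin n × Fin d) F)
              = C ((∏ j : Fin d, Nat.multinomial univ (κ j) : ℕ) : F) := by
            push_cast
            simp [map_prod]
          rw [h2, C_mul_monomial, mul_one]
  rw [expand, coeff_sum]
  simp only [coeff_monomial]
  set κ₀ : Fin d → Fin n → ℕ := fun j i => α (i, j) with hκ₀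
  have hAiff : ∀ κ : Fin d → Fin n → ℕ,
      (Finsupp.equivFunOnFinite.symm fun v : Fin n × Fin d => κ v.2 v.1) = α ↔ κ = κ₀ := by
    intro κ
    constructor
    · intro h
      funext j i
      have := congrArg (fun β : (Fin n × Fin d) →₀ ℕ => β (i, j)) h
      simpa using this
    · rintro rfl
      ext v
      simp [hκ₀]
  have hmem : κ₀ ∈ Fintype.piFinset (fun j : Fin d => piAntidiag (univ : Finset (Fin n)) (m j))
      ↔ ∀ j, ∑ i : Fin n, α (i, j) = m j := by
    simp [Fintype.mem_piFinset, mem_piAntidiag, hκ₀]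
  by_cases hcond : ∀ j, ∑ i : Fin n, α (i, j) = m j
  · rw [if_pos hcond]
    rw [Finset.sum_eq_single_of_mem κ₀ (hmem.mpr hcond)]
    · rw [if_pos ((hAiff κ₀).mpr rfl)]
      push_cast
      rfl
    · intro κ _ hne
      rw [if_neg (fun h => hne ((hAiff κ).mp h))]
  · rw [if_neg hcond]
    convert mul_zero c
    apply Finset.sum_eq_zero
    intro κ hκ
    rw [if_neg]
    intro h
    have : κ = κ₀ := (hAiff κ).mp h
    subst this
    exact hcond (hmem.mp hκ)

lemma multinomial_eq_factorial_of_le_one {ι : Type*} {s : Finset ι} {f : ι → ℕ}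
    (h : ∀ i ∈ s, f i ≤ 1) :
    Nat.multinomial s f = Nat.factorial (∑ i ∈ s, f i) := by
  have h1 : ∏ i ∈ s, Nat.factorial (f i) = 1 := Finset.prod_eq_one fun i hi => by
    rcases Nat.le_one_iff_eq_zero_or_eq_one.mp (h i hi) with h' | h' <;> simp [h']
  have := Nat.multinomial_spec s f
  rwa [h1, one_mul] at this

lemma list_count_eq {β : Type*} [DecidableEq β] (l : List β) (j : β) :
    (∑ i : Fin l.length, if l.get i = j then 1 else 0) = l.count j := by
  calc (∑ i : Fin l.length, if l.get i = j then 1 else 0)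
      = (univ.filter (fun i : Fin l.length => j = l.get i)).card := by
        rw [Finset.card_filter]
        exact Finset.sum_congr rfl fun i _ => if_congr eq_comm rfl rfl
    _ = Multiset.count j (Multiset.map l.get (univ : Finset (Fin l.length)).val) := by
        rw [Multiset.count_map]; rfl
    _ = l.count j := by
        rw [Fin.univ_val_map, List.ofFn_get, Multiset.coe_count]

end Aux

/-- over a field of characteristic `p` (prime or zero), the formal
combinatorial degree of a nonzero monomial `c·x^m` (`c ≠ 0`, `m ≠ 0`) is at most its
total degree `D = m_1 + ⋯ + m_d` (i.e. `Δ^k(c·x^m) = 0` for all `k > D`), with equality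
(i.e. `Δ^D(c·x^m) ≠ 0`) if and only if the monomial is totally reduced, meaning all
exponents are less than `p` (in characteristic `0` every monomial is totally reduced and
equality always holds). -/
theorem combdeg_monomial_le_totalDegree_iff_totally_reduced
    {F : Type*} [Field F] {p : ℕ} [CharP F p] (hp : p.Prime ∨ p = 0)
    {d : ℕ} (m : Fin d →₀ ℕ) (hm : m ≠ 0) (c : F) (hc : c ≠ 0)
    (D : ℕ) (hD : D = m.sum fun _ e => e) :
    (∀ k : ℕ, D < k → polDefect k (MvPolynomial.monomial m c) = 0) ∧
    (polDefect D (MvPolynomial.monomial m c) ≠ 0 ↔ (p = 0 ∨ ∀ j, m j < p)) := by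
    classical
  have hDuniv : D = ∑ j : Fin d, m j := by
    rw [hD]; exact Finsupp.sum_fintype _ _ fun _ => rfl
  have hf0 : ∀ k : ℕ, coeff 0 (aeval
      (fun j : Fin d => ∑ i : Fin k, (X (i, j) : MvPolynomial (Fin k × Fin d) F))
      (monomial m c)) = 0 := by
    intro k
    rw [coeff_fullSub, if_neg]
    intro h
    apply hm
    ext j
    have := h j
    simpa using this.symm
  constructor
  · intro k hk
    ext α
    rw [coeff_polDefect _ (hf0 k), coeff_zero]
    split
    · rename_i hTu
      rw [coeff_fullSub]
      split
      · rename_i hcond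
        exfalso
        have hsum1 : ∑ i : Fin k, ∑ j : Fin d, α (i, j) = D := by
          rw [Finset.sum_comm]
          exact (Finset.sum_congr rfl fun j _ => hcond j).trans hDuniv.symm
        have hrow : ∀ i : Fin k, 1 ≤ ∑ j : Fin d, α (i, j) := by
          intro i
          have hi : i ∈ α.support.image Prod.fst := hTu ▸ Finset.mem_univ i
          obtain ⟨v, hv, hvi⟩ := Finset.mem_image.mp hi
          have : 1 ≤ α (i, v.2) := by
            rw [← hvi]
            exact Nat.one_le_iff_ne_zero.mpr (Finsupp.mem_support_iff.mp hv)
          calc 1 ≤ α (i, v.2) := this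
            _ ≤ ∑ j : Fin d, α (i, j) :=
              Finset.single_le_sum (f := fun j => α (i, j)) (fun _ _ => Nat.zero_le _)
                (Finset.mem_univ v.2)
        have : k ≤ D := by
          calc k = ∑ _i : Fin k, 1 := by simp
            _ ≤ ∑ i : Fin k, ∑ j : Fin d, α (i, j) := Finset.sum_le_sum fun i _ => hrow i
            _ = D := hsum1
        omega
      · rfl
    · rfl
  · -- the support consideration: for any α with full image and correct column sums at n = D,
    -- all entries of α are ≤ 1
    have hsmall : ∀ α : (Fin D × Fin d) →₀ ℕ, α.support.image Prod.fst = univ →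
        (∀ j, ∑ i : Fin D, α (i, j) = m j) → ∀ v, α v ≤ 1 := by
      intro α hTu hcond v
      have htot : ∑ v ∈ α.support, α v = D := by
        rw [Finset.sum_subset (Finset.subset_univ α.support)
          (fun v _ hv => Finsupp.notMem_support_iff.mp hv)]
        rw [show (∑ v : Fin D × Fin d, α v) = ∑ i : Fin D, ∑ j : Fin d, α (i, j) from
          Fintype.sum_prod_type _]
        rw [Finset.sum_comm]
        exact (Finset.sum_congr rfl fun j _ => hcond j).trans hDuniv.symm
      have hcard : D ≤ α.support.card := by
        calc D = (univ : Finset (Fin D)).card := by simp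
          _ = (α.support.image Prod.fst).card := by rw [hTu]
          _ ≤ α.support.card := Finset.card_image_le
      have hle : ∀ v ∈ α.support, 1 ≤ α v := fun v hv =>
        Nat.one_le_iff_ne_zero.mpr (Finsupp.mem_support_iff.mp hv)
      have hsum_ge : α.support.card ≤ ∑ v ∈ α.support, α v := by
        calc α.support.card = ∑ _v ∈ α.support, 1 := by simp
          _ ≤ ∑ v ∈ α.support, α v := Finset.sum_le_sum hle
      have heq : ∀ v ∈ α.support, α v = 1 := by
        by_contra hcon
        push_neg at hcon
        obtain ⟨v0, hv0, hne⟩ := hcon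
        have h2 : 2 ≤ α v0 := by
          have := hle v0 hv0
          omega
        have e1 : ∑ v ∈ α.support.erase v0, α v + α v0 = ∑ v ∈ α.support, α v :=
          Finset.sum_erase_add _ _ hv0
        have h3 : (α.support.erase v0).card ≤ ∑ v ∈ α.support.erase v0, α v := by
          rw [Finset.card_eq_sum_ones]
          exact Finset.sum_le_sum fun v hv => hle v (Finset.mem_of_mem_erase hv)
        have e2 : (α.support.erase v0).card = α.support.card - 1 :=
          Finset.card_erase_of_mem hv0
        have h4 : 1 ≤ α.support.card := Finset.card_pos.mpr ⟨v0, hv0⟩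
        omega
      by_cases hv : v ∈ α.support
      · exact le_of_eq (heq v hv)
      · rw [Finsupp.notMem_support_iff.mp hv]; omega
    constructor
    · intro hne
      by_contra hcon
      push_neg at hcon
      obtain ⟨hp0, j1, hj1⟩ := hcon
      have hprime : p.Prime := hp.resolve_right hp0
      apply hne
      ext α
      rw [coeff_polDefect _ (hf0 D), coeff_zero]
      split
      · rename_i hTu
        rw [coeff_fullSub]
        split
        · rename_i hcond
          have hent : ∀ v, α v ≤ 1 := hsmall α hTu hcond
          have hfac : ((Nat.multinomial (univ : Finset (Fin D)) fun i => α (i, j1) : ℕ) : F)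
              = 0 := by
            rw [multinomial_eq_factorial_of_le_one (fun i _ => hent (i, j1)), hcond j1]
            exact (CharP.cast_eq_zero_iff F p _).mpr (Nat.dvd_factorial hprime.pos hj1)
          rw [Finset.prod_eq_zero (Finset.mem_univ j1) hfac, mul_zero]
        · rfl
      · rfl
    · intro htr hzero
      -- construct the witness exponent α
      have hcardM : Multiset.card (Finsupp.toMultiset m) = D := by
        rw [Finsupp.card_toMultiset, hD]
        rfl
      set l : List (Fin d) := (Finsupp.toMultiset m).toList with hl
      have hlen : l.length = D := by rw [hl, Multiset.length_toList, hcardM]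
      set σ : Fin D → Fin d := fun i => l.get (Fin.cast hlen.symm i) with hσ
      have hcount : ∀ j, (∑ i : Fin D, if σ i = j then 1 else 0) = m j := by
        intro j
        have h1 : (∑ i : Fin D, if σ i = j then 1 else 0)
            = ∑ i : Fin l.length, if l.get i = j then 1 else 0 := by
          exact Fintype.sum_equiv (finCongr hlen.symm) _ _ (fun i => rfl)
        rw [h1, list_count_eq]
        rw [hl, ← Multiset.coe_count, Multiset.coe_toList, Finsupp.count_toMultiset]
      set α : (Fin D × Fin d) →₀ ℕ :=
        Finsupp.equivFunOnFinite.symm (fun v : Fin D × Fin d => if σ v.1 = v.2 then 1 else 0)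
        with hα
      have hαapply : ∀ v : Fin D × Fin d, α v = if σ v.1 = v.2 then 1 else 0 := by
        intro v; rw [hα]; rfl
      have hcond : ∀ j, ∑ i : Fin D, α (i, j) = m j := by
        intro j
        rw [← hcount j]
        exact Finset.sum_congr rfl fun i _ => hαapply (i, j)
      have hTu : α.support.image Prod.fst = univ := by
        apply Finset.eq_univ_of_forall
        intro i
        apply Finset.mem_image.mpr
        refine ⟨(i, σ i), ?_, rfl⟩
        rw [Finsupp.mem_support_iff, hαapply (i, σ i)]
        simp
      have hcoeff := coeff_polDefect (n := D) (monomial m c) (hf0 D) α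
      rw [hzero, coeff_zero, if_pos hTu, coeff_fullSub, if_pos hcond] at hcoeff
      have hent : ∀ v, α v ≤ 1 := by
        intro v; rw [hαapply v]; split <;> omega
      have hprodne : (∏ j : Fin d,
          ((Nat.multinomial (univ : Finset (Fin D)) fun i => α (i, j) : ℕ) : F)) ≠ 0 := by
        rw [Finset.prod_ne_zero_iff]
        intro j _
        rw [multinomial_eq_factorial_of_le_one (fun i _ => hent (i, j)), hcond j]
        rcases hp with hprime | hp0
        · rcases htr with h0 | hlt
          · exact absurd h0 hprime.ne_zero
          · intro h0eq
            have hdvd : p ∣ Nat.factorial (m j) := (CharP.cast_eq_zero_iff F p _).mp h0eq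
            exact absurd ((Nat.Prime.dvd_factorial hprime).mp hdvd) (not_le.mpr (hlt j))
        · subst hp0
          haveI : CharZero F := CharP.charP_to_charZero F
          exact Nat.cast_ne_zero.mpr (Nat.factorial_ne_zero (m j))
      exact (mul_ne_zero hc hprodne) hcoeff.symm
end
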